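/- arXiv:2106.04988 — 4 statements merged into one kernel-verified Lean document; each statement's English description precedes it below -/
import Mathlib

section
/- Let l : ℝ → ℝ be concave on the interval [0,1]. Suppose 0 ≤ x₁ ≤ y₁ ≤ y₀ ≤ x₀ ≤ 1 and p, q ∈ [0,1] satisfy p·x₁ + (1−p)·x₀ = q·y₁ + (1−q)·y₀. Then p·l(x₁) + (1−p)·l(x₀) ≤ q·l(y₁) + (1−q)·l(y₀). -/
/-!
Let `g` be the secant of `l` through `x₁` and `x₀`. Since `g` is affine, both sides of the claim
are `g` evaluated at the common mean when `l` is replaced by `g`; the left side is unchanged by this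
replacement, and the right side can only decrease, because a concave function lies above its
secant between the two nodes.
-/

open Set

variable {𝕜 : Type*}

section Field

variable [Field 𝕜] (f : 𝕜 → 𝕜) (a b : 𝕜)

/-- When `a = b` this is the constant `f a`, since `slope f a a = 0`. -/
def secant (t : 𝕜) : 𝕜 :=
  f a + (t - a) * slope f a b

@[simp]
theorem secant_left : secant f a b a = f a := by
  simp [secant]

@[simp]
theorem secant_right : secant f a b b = f b := by
  rw [secant, ← smul_eq_mul, sub_smul_slope, vsub_eq_sub, add_sub_cancel]

theorem secant_affine_combo (w u v : 𝕜) :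
    secant f a b (w * u + (1 - w) * v) = w * secant f a b u + (1 - w) * secant f a b v := by
  simp only [secant]
  ring

end Field

theorem ConcaveOn.secant_le [Field 𝕜] [LinearOrder 𝕜] [IsStrictOrderedRing 𝕜]
    {s : Set 𝕜} {f : 𝕜 → 𝕜} (hf : ConcaveOn 𝕜 s f) {a b t : 𝕜} (ha : a ∈ s) (hb : b ∈ s)
    (ht : t ∈ Icc a b) : secant f a b t ≤ f t := by
  obtain ⟨hat, htb⟩ := ht
  rcases hat.lt_or_eq with hat | rfl
  · have hba : 0 < b - a := sub_pos.2 (hat.trans_le htb)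
    have hsum : (b - t) / (b - a) + (t - a) / (b - a) = 1 := by
      field_simp
      ring
    have hcombo : ((b - t) / (b - a)) • a + ((t - a) / (b - a)) • b = t := by
      simp only [smul_eq_mul]
      field_simp
      ring
    calc secant f a b t = ((b - t) / (b - a)) • f a + ((t - a) / (b - a)) • f b := by
          simp only [secant, slope_def_field, smul_eq_mul]
          field_simp [hba.ne']
          ring
      _ ≤ f t := (hf.2 ha hb (div_nonneg (sub_nonneg.2 htb) hba.le)
          (div_nonneg (sub_nonneg.2 hat.le) hba.le) hsum).trans_eq (congrArg f hcombo)
  · exact (secant_left f a b).le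

theorem nested_interval_concave_le_general
    (l : ℝ → ℝ) (hl : ConcaveOn ℝ (Set.Icc (0:ℝ) 1) l)
    (x₁ y₁ y₀ x₀ p q : ℝ)
    (hx₁ : 0 ≤ x₁) (hxy₁ : x₁ ≤ y₁) (hy : y₁ ≤ y₀) (hxy₀ : y₀ ≤ x₀) (hx₀ : x₀ ≤ 1)
    (hq : q ∈ Set.Icc (0:ℝ) 1)
    (hmean : p * x₁ + (1 - p) * x₀ = q * y₁ + (1 - q) * y₀) :
    p * l x₁ + (1 - p) * l x₀ ≤ q * l y₁ + (1 - q) * l y₀ := by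
  have hx₁x₀ : x₁ ≤ x₀ := hxy₁.trans (hy.trans hxy₀)
  have hsub : Icc x₁ x₀ ⊆ Icc 0 1 := Icc_subset_Icc hx₁ hx₀
  have hx₁mem := hsub (left_mem_Icc.2 hx₁x₀)
  have hx₀mem := hsub (right_mem_Icc.2 hx₁x₀)
  have hle₁ : secant l x₁ x₀ y₁ ≤ l y₁ := hl.secant_le hx₁mem hx₀mem ⟨hxy₁, hy.trans hxy₀⟩
  have hle₀ : secant l x₁ x₀ y₀ ≤ l y₀ := hl.secant_le hx₁mem hx₀mem ⟨hxy₁.trans hy, hxy₀⟩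
  calc p * l x₁ + (1 - p) * l x₀
      = p * secant l x₁ x₀ x₁ + (1 - p) * secant l x₁ x₀ x₀ := by
        rw [secant_left, secant_right]
    _ = q * secant l x₁ x₀ y₁ + (1 - q) * secant l x₁ x₀ y₀ := by
      rw [← secant_affine_combo, hmean, secant_affine_combo]
    _ ≤ q * l y₁ + (1 - q) * l y₀ :=
      add_le_add (mul_le_mul_of_nonneg_left hle₁ hq.1)
        (mul_le_mul_of_nonneg_left hle₀ (sub_nonneg.2 hq.2))

/-- Key convexity lemma behind the nested-posterior-interval rule.
If `l` is concave on `[0,1]`, `0 ≤ x₁ ≤ y₁ ≤ y₀ ≤ x₀ ≤ 1`, and `p, q ∈ [0,1]` give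
the same mean, `p·x₁ + (1−p)·x₀ = q·y₁ + (1−q)·y₀`, then the expectation of `l`
over the wider interval is smaller. -/
theorem nested_interval_concave_le
    (l : ℝ → ℝ) (hl : ConcaveOn ℝ (Set.Icc (0:ℝ) 1) l)
    (x₁ y₁ y₀ x₀ p q : ℝ)
    (hx₁ : 0 ≤ x₁) (hxy₁ : x₁ ≤ y₁) (hy : y₁ ≤ y₀) (hxy₀ : y₀ ≤ x₀) (hx₀ : x₀ ≤ 1)
    (hp : p ∈ Set.Icc (0:ℝ) 1) (hq : q ∈ Set.Icc (0:ℝ) 1)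
    (hmean : p * x₁ + (1 - p) * x₀ = q * y₁ + (1 - q) * y₀) :
    p * l x₁ + (1 - p) * l x₀ ≤ q * l y₁ + (1 - q) * l y₀ :=
  nested_interval_concave_le_general l hl x₁ y₁ y₀ x₀ p q hx₁ hxy₁ hy hxy₀ hx₀ hq hmean
end

section
/- Consider the bilinear loss l*(p) = min{C_R, p·C_F} with 0 < C_R < C_F and kink at p̃ = C_R/C_F. If the posterior interval [P[u = 0 | y_i = 1], P[u = 0 | y_i = 0]] of component c_i does not contain p̃ (i.e. either both endpoints are ≤ p̃ or both are ≥ p̃), then L_ω(i) = L_π, i.e. VoI_G(i) = 0. -/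
open scoped Classical

/-- Probability of an event `E` under weights `w` on a finite outcome space. -/
noncomputable def Pr {Ω : Type*} [Fintype Ω] (w : Ω → ℝ) (E : Ω → Prop) : ℝ :=
  ∑ ω ∈ Finset.univ.filter E, w ω

/-- Conditional probability `P[A | B]`. -/
noncomputable def cPr {Ω : Type*} [Fintype Ω] (w : Ω → ℝ) (A B : Ω → Prop) : ℝ :=
  Pr w (fun ω => A ω ∧ B ω) / Pr w B

/-- Posterior expected loss of inspecting a component with binary inspection outcome `y`
(`y = false` is an alarm), where `F` is the system-failure event and `l` the optimal
expected loss as a function of the system failure probability. -/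
noncomputable def postLoss {Ω : Type*} [Fintype Ω] (w : Ω → ℝ) (F : Ω → Prop)
    (y : Ω → Bool) (l : ℝ → ℝ) : ℝ :=
  Pr w (fun ω => y ω = false) * l (cPr w F (fun ω => y ω = false))
    + (1 - Pr w (fun ω => y ω = false)) * l (cPr w F (fun ω => y ω = true))

/-- Global value of information of inspecting a component with inspection outcome `y`. -/
noncomputable def VoIG {Ω : Type*} [Fintype Ω] (w : Ω → ℝ) (F : Ω → Prop)
    (y : Ω → Bool) (l : ℝ → ℝ) : ℝ :=
  l (Pr w F) - postLoss w F y l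

/-!
Both posteriors lie on one side of the kink, and the bilinear loss is affine on each side.
By the law of total probability the prior failure probability is the `h_i`-weighted average
of the two posteriors, so averaging the loss over the inspection outcome commutes with `l*`.
-/

section Probability

variable {Ω : Type*} [Fintype Ω] (w : Ω → ℝ)

theorem Pr_and_add_Pr_and_not (A B : Ω → Prop) :
    Pr w (fun ω => A ω ∧ B ω) + Pr w (fun ω => A ω ∧ ¬B ω) = Pr w A := by
  unfold Pr
  rw [← Finset.sum_filter_add_sum_filter_not (Finset.univ.filter A) B,
    Finset.filter_filter, Finset.filter_filter]
  -- the two sides differ only in their (classical vs. `instDecidableAnd`) filter instances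
  congr

theorem Pr_true_eq_one_sub (hw1 : ∑ ω, w ω = 1) (y : Ω → Bool) :
    Pr w (fun ω => y ω = true) = 1 - Pr w (fun ω => y ω = false) := by
  have h := Pr_and_add_Pr_and_not w (fun _ => True) (fun ω => y ω = false)
  simp only [true_and, Bool.not_eq_false] at h
  have huniv : Pr w (fun _ => True) = 1 := by simp [Pr, hw1]
  linarith

theorem Pr_eq_mul_cPr_add_mul_cPr (hw1 : ∑ ω, w ω = 1) (F : Ω → Prop) (y : Ω → Bool)
    (h0 : Pr w (fun ω => y ω = false) ≠ 0) (h1 : Pr w (fun ω => y ω = false) ≠ 1) :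
    Pr w F = Pr w (fun ω => y ω = false) * cPr w F (fun ω => y ω = false)
      + (1 - Pr w (fun ω => y ω = false)) * cPr w F (fun ω => y ω = true) := by
  have h1' : 1 - Pr w (fun ω => y ω = false) ≠ 0 := sub_ne_zero.mpr h1.symm
  rw [cPr, cPr, Pr_true_eq_one_sub w hw1, mul_div_cancel₀ _ h0, mul_div_cancel₀ _ h1',
    ← Pr_and_add_Pr_and_not w F (fun ω => y ω = false)]
  simp only [Bool.not_eq_false]

end Probability

theorem postLoss_eq_of_eqOn_affine {Ω : Type*} [Fintype Ω] {w : Ω → ℝ}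
    (hw1 : ∑ ω, w ω = 1) {F : Ω → Prop} {y : Ω → Bool} {l : ℝ → ℝ} {s : Set ℝ}
    (h0 : 0 < Pr w (fun ω => y ω = false)) (h1 : Pr w (fun ω => y ω = false) < 1)
    (hs : Convex ℝ s) {a b : ℝ} (hl : ∀ x ∈ s, l x = a * x + b)
    (hfalse : cPr w F (fun ω => y ω = false) ∈ s) (htrue : cPr w F (fun ω => y ω = true) ∈ s) :
    postLoss w F y l = l (Pr w F) := by
  have htotal := Pr_eq_mul_cPr_add_mul_cPr w hw1 F y h0.ne' h1.ne
  have hprior : Pr w F ∈ s := by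
    rw [htotal]
    exact hs hfalse htrue h0.le (sub_nonneg.mpr h1.le) (add_sub_cancel _ _)
  rw [postLoss, hl _ hprior, hl _ hfalse, hl _ htrue, htotal]
  ring

theorem bilinear_loss_voi_zero_of_avoids_kink_general {Ω : Type*} [Fintype Ω] (w : Ω → ℝ)
    (hw1 : ∑ ω, w ω = 1)
    (u yi : Ω → Bool)
    (hi0 : 0 < Pr w (fun ω => yi ω = false)) (hi1 : Pr w (fun ω => yi ω = false) < 1)
    (CR CF : ℝ) (hCR : 0 < CR) (hCRF : CR < CF)
    (havoid :
      (cPr w (fun ω => u ω = false) (fun ω => yi ω = true) ≤ CR / CF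
        ∧ cPr w (fun ω => u ω = false) (fun ω => yi ω = false) ≤ CR / CF)
      ∨ (CR / CF ≤ cPr w (fun ω => u ω = false) (fun ω => yi ω = true)
        ∧ CR / CF ≤ cPr w (fun ω => u ω = false) (fun ω => yi ω = false))) :
    postLoss w (fun ω => u ω = false) yi (fun p => min CR (p * CF))
        = min CR (Pr w (fun ω => u ω = false) * CF)
      ∧ VoIG w (fun ω => u ω = false) yi (fun p => min CR (p * CF)) = 0 := by
  have hCF : 0 < CF := hCR.trans hCRF
  obtain ⟨s, a, b, hs, hl, htrue, hfalse⟩ : ∃ (s : Set ℝ) (a b : ℝ), Convex ℝ s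
      ∧ (∀ x ∈ s, min CR (x * CF) = a * x + b)
      ∧ cPr w (fun ω => u ω = false) (fun ω => yi ω = true) ∈ s
      ∧ cPr w (fun ω => u ω = false) (fun ω => yi ω = false) ∈ s := by
    rcases havoid with ⟨htrue, hfalse⟩ | ⟨htrue, hfalse⟩
    · refine ⟨Set.Iic (CR / CF), CF, 0, convex_Iic _, fun x hx => ?_, htrue, hfalse⟩
      rw [min_eq_right ((le_div_iff₀ hCF).mp hx)]
      ring
    · refine ⟨Set.Ici (CR / CF), 0, CR, convex_Ici _, fun x hx => ?_, htrue, hfalse⟩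
      rw [min_eq_left ((div_le_iff₀ hCF).mp hx)]
      ring
  have hpost := postLoss_eq_of_eqOn_affine hw1 hi0 hi1 hs hl hfalse htrue
  exact ⟨hpost, by rw [VoIG, hpost, sub_self]⟩

/-- For the bilinear loss `l*(p) = min{C_R, p·C_F}` with `0 < C_R < C_F` and
kink at `p̃ = C_R/C_F`, if the posterior interval of component `c_i` does not contain `p̃`
(both endpoints on the same side of `p̃`), then `L_ω(i) = L_π`, i.e. `VoI_G(i) = 0`. -/
theorem bilinear_loss_voi_zero_of_avoids_kink {Ω : Type*} [Fintype Ω] (w : Ω → ℝ)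
    (hw0 : ∀ ω, 0 ≤ w ω) (hw1 : ∑ ω, w ω = 1)
    (u yi : Ω → Bool)
    (hi0 : 0 < Pr w (fun ω => yi ω = false)) (hi1 : Pr w (fun ω => yi ω = false) < 1)
    (CR CF : ℝ) (hCR : 0 < CR) (hCRF : CR < CF)
    (havoid :
      (cPr w (fun ω => u ω = false) (fun ω => yi ω = true) ≤ CR / CF
        ∧ cPr w (fun ω => u ω = false) (fun ω => yi ω = false) ≤ CR / CF)
      ∨ (CR / CF ≤ cPr w (fun ω => u ω = false) (fun ω => yi ω = true)
        ∧ CR / CF ≤ cPr w (fun ω => u ω = false) (fun ω => yi ω = false))) :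
    postLoss w (fun ω => u ω = false) yi (fun p => min CR (p * CF))
        = min CR (Pr w (fun ω => u ω = false) * CF)
      ∧ VoIG w (fun ω => u ω = false) yi (fun p => min CR (p * CF)) = 0 :=
  bilinear_loss_voi_zero_of_avoids_kink_general w hw1 u yi hi0 hi1 CR CF hCR hCRF havoid
end

section
/- In a parallel system, if p_i ≤ p_j then the posterior intervals are nested: P[u = 0 | y_i = 1] ≤ P[u = 0 | y_j = 1] and P[u = 0 | y_i = 0] ≥ P[u = 0 | y_j = 0], provided 0 < h_i < 1 and 0 < h_j < 1. -/
/-! The system fails only in the single all-failed state, where every inspection reads "failed"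
with probability `1 - ε_FS`. Hence `P[u = 0, y_k = 0] = (1 - ε_FS) p_π` and
`P[u = 0, y_k = 1] = ε_FS p_π` do not depend on `k`, and the two posteriors differ only through
their denominators `h_k` and `1 - h_k`. Since the error rates are the same for all components,
`h_k = ε_FA + K p_k` with `K ≥ 0`, so `p_i ≤ p_j` gives `h_i ≤ h_j`. -/

open scoped Classical

namespace Pr

variable {Ω : Type*} [Fintype Ω] (w : Ω → ℝ)

lemma congr_event {E F : Ω → Prop} (h : ∀ ω, E ω ↔ F ω) : Pr w E = Pr w F := by
  rw [show E = F from funext fun ω => propext (h ω)]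

lemma nonneg (hw0 : ∀ ω, 0 ≤ w ω) (E : Ω → Prop) : 0 ≤ Pr w E :=
  Finset.sum_nonneg fun ω _ => hw0 ω

lemma eq_sum_ite (E : Ω → Prop) : Pr w E = ∑ ω, if E ω then w ω else 0 :=
  Finset.sum_filter _ _

lemma mono (hw0 : ∀ ω, 0 ≤ w ω) {E F : Ω → Prop} (h : ∀ ω, E ω → F ω) : Pr w E ≤ Pr w F := by
  simp only [eq_sum_ite]
  refine Finset.sum_le_sum fun ω _ => ?_
  by_cases hE : E ω
  · simp [hE, h ω hE]
  · by_cases hF : F ω <;> simp [hE, hF, hw0 ω]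

lemma and_add_and_not (E Q : Ω → Prop) :
    Pr w (fun ω => E ω ∧ Q ω) + Pr w (fun ω => E ω ∧ ¬Q ω) = Pr w E := by
  simp only [eq_sum_ite, ← Finset.sum_add_distrib]
  refine Finset.sum_congr rfl fun ω _ => ?_
  by_cases hE : E ω <;> by_cases hQ : Q ω <;> simp [hE, hQ]

lemma not_eq_one_sub (hw1 : ∑ ω, w ω = 1) (E : Ω → Prop) : Pr w (fun ω => ¬E ω) = 1 - Pr w E := by
  have h := and_add_and_not w (fun _ => True) E
  simp only [true_and, eq_sum_ite w (fun _ => True), if_true, hw1] at h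
  linarith

lemma and_comp_eq_sum {β : Type*} [Fintype β] (f : Ω → β) (A : Ω → Prop) (P : β → Prop) :
    Pr w (fun ω => A ω ∧ P (f ω))
      = ∑ b ∈ Finset.univ.filter P, Pr w (fun ω => A ω ∧ f ω = b) := by
  simp only [eq_sum_ite]
  rw [Finset.sum_comm]
  refine Finset.sum_congr rfl fun ω _ => ?_
  by_cases hA : A ω <;> simp [hA]

lemma and_eq_mul_of_cPr_eq (hw0 : ∀ ω, 0 ≤ w ω) {A B : Ω → Prop} {c : ℝ}
    (h : 0 < Pr w B → cPr w A B = c) : Pr w (fun ω => A ω ∧ B ω) = c * Pr w B := by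
  rcases (nonneg w hw0 B).eq_or_lt with hzero | hpos
  · have hle : Pr w (fun ω => A ω ∧ B ω) ≤ Pr w B := mono w hw0 fun _ => And.right
    rw [← hzero, mul_zero]
    exact le_antisymm (hzero ▸ hle) (nonneg w hw0 _)
  · rw [← h hpos, cPr, div_mul_cancel₀ _ hpos.ne']

lemma and_comp_eq_mul {β : Type*} [Fintype β] (f : Ω → β) (A : Ω → Prop) (P : β → Prop)
    (c : ℝ) (h : ∀ b, P b → Pr w (fun ω => A ω ∧ f ω = b) = c * Pr w (fun ω => f ω = b)) :
    Pr w (fun ω => A ω ∧ P (f ω)) = c * Pr w (fun ω => P (f ω)) := by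
  have hP := and_comp_eq_sum w f (fun _ => True) P
  simp only [true_and] at hP
  rw [and_comp_eq_sum, hP, Finset.mul_sum]
  exact Finset.sum_congr rfl fun b hb => h b (Finset.mem_filter.mp hb).2

end Pr

def HasErrorRates {Ω : Type*} [Fintype Ω] {N : ℕ} (w : Ω → ℝ) (s : Ω → Fin N → Bool)
    (y : Fin N → Ω → Bool) (εFA εFS : ℝ) : Prop :=
  ∀ (k : Fin N) (σ : Fin N → Bool), 0 < Pr w (fun ω => s ω = σ) →
    cPr w (fun ω => y k ω = false) (fun ω => s ω = σ) = if σ k = true then εFA else 1 - εFS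

section Inspection

variable {Ω : Type*} [Fintype Ω] {N : ℕ} {w : Ω → ℝ} {s : Ω → Fin N → Bool}
  {y : Fin N → Ω → Bool} {εFA εFS : ℝ}

lemma Pr_inspection_false_and_state (hw0 : ∀ ω, 0 ≤ w ω)
    (hemit : HasErrorRates w s y εFA εFS) (k : Fin N) (σ : Fin N → Bool) :
    Pr w (fun ω => y k ω = false ∧ s ω = σ)
      = (if σ k = true then εFA else 1 - εFS) * Pr w (fun ω => s ω = σ) :=
  Pr.and_eq_mul_of_cPr_eq w hw0 (hemit k σ)

lemma Pr_inspection_false (hw0 : ∀ ω, 0 ≤ w ω) (hw1 : ∑ ω, w ω = 1)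
    (hemit : HasErrorRates w s y εFA εFS) (k : Fin N) :
    Pr w (fun ω => y k ω = false)
      = εFA + (1 - εFA - εFS) * Pr w (fun ω => s ω k = false) := by
  have hfailed : Pr w (fun ω => y k ω = false ∧ s ω k = false)
      = (1 - εFS) * Pr w (fun ω => s ω k = false) :=
    Pr.and_comp_eq_mul w s _ (fun σ => σ k = false) _ fun σ hσ => by
      rw [Pr_inspection_false_and_state hw0 hemit, if_neg (by simp [hσ])]
  have hworking : Pr w (fun ω => y k ω = false ∧ ¬s ω k = false)
      = εFA * (1 - Pr w (fun ω => s ω k = false)) := by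
    rw [Pr.and_comp_eq_mul w s _ (fun σ => ¬σ k = false) εFA fun σ hσ => by
      rw [Pr_inspection_false_and_state hw0 hemit, if_pos (by simpa using hσ)]]
    rw [Pr.not_eq_one_sub w hw1 (fun ω => s ω k = false)]
  rw [← Pr.and_add_and_not w _ (fun ω => s ω k = false), hfailed, hworking]
  ring

lemma Pr_allFailed_and_inspection_false (hw0 : ∀ ω, 0 ≤ w ω) (hemit : HasErrorRates w s y εFA εFS)
    (k : Fin N) :
    Pr w (fun ω => (∀ m, s ω m = false) ∧ y k ω = false)
      = (1 - εFS) * Pr w (fun ω => ∀ m, s ω m = false) := by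
  have hall : ∀ ω, (∀ m, s ω m = false) ↔ s ω = fun _ => false := fun ω => funext_iff.symm
  rw [Pr.congr_event w hall, Pr.congr_event w fun ω => and_comm.trans (and_congr_right' (hall ω)),
    Pr_inspection_false_and_state hw0 hemit, if_neg Bool.false_ne_true]

lemma Pr_allFailed_and_inspection_true (hw0 : ∀ ω, 0 ≤ w ω) (hemit : HasErrorRates w s y εFA εFS)
    (k : Fin N) :
    Pr w (fun ω => (∀ m, s ω m = false) ∧ y k ω = true)
      = εFS * Pr w (fun ω => ∀ m, s ω m = false) := by
  have h := Pr.and_add_and_not w (fun ω => ∀ m, s ω m = false) (fun ω => y k ω = false)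
  simp only [Bool.not_eq_false, Pr_allFailed_and_inspection_false hw0 hemit] at h
  linarith

end Inspection

theorem parallel_nested_intervals_general {Ω : Type*} [Fintype Ω] {N : ℕ} (w : Ω → ℝ)
    (hw0 : ∀ ω, 0 ≤ w ω) (hw1 : ∑ ω, w ω = 1)
    (s : Ω → Fin N → Bool) (y : Fin N → Ω → Bool)
    (εFA εFS : ℝ) (hFA : εFA < 1/2) (hFS0 : 0 ≤ εFS) (hFS : εFS < 1/2)
    (hemit : ∀ (k : Fin N) (σ : Fin N → Bool), 0 < Pr w (fun ω => s ω = σ) →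
      cPr w (fun ω => y k ω = false) (fun ω => s ω = σ)
        = if σ k = true then εFA else 1 - εFS)
    (i j : Fin N)
    (hi0 : 0 < Pr w (fun ω => y i ω = false))
    (hj1 : Pr w (fun ω => y j ω = false) < 1)
    (hpij : Pr w (fun ω => s ω i = false) ≤ Pr w (fun ω => s ω j = false)) :
    cPr w (fun ω => ∀ k, s ω k = false) (fun ω => y i ω = true)
        ≤ cPr w (fun ω => ∀ k, s ω k = false) (fun ω => y j ω = true)
      ∧ cPr w (fun ω => ∀ k, s ω k = false) (fun ω => y j ω = false)
        ≤ cPr w (fun ω => ∀ k, s ω k = false) (fun ω => y i ω = false) := by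
  have hij : Pr w (fun ω => y i ω = false) ≤ Pr w (fun ω => y j ω = false) := by
    rw [Pr_inspection_false hw0 hw1 hemit i, Pr_inspection_false hw0 hw1 hemit j]
    have hK : 0 ≤ 1 - εFA - εFS := by linarith
    gcongr
  have hpπ := Pr.nonneg w hw0 (fun ω => ∀ m, s ω m = false)
  have htrue (k : Fin N) : Pr w (fun ω => y k ω = true) = 1 - Pr w (fun ω => y k ω = false) := by
    simpa only [Bool.not_eq_false] using Pr.not_eq_one_sub w hw1 (fun ω => y k ω = false)
  constructor
  · rw [cPr, cPr, Pr_allFailed_and_inspection_true hw0 hemit,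
      Pr_allFailed_and_inspection_true hw0 hemit, htrue, htrue]
    exact div_le_div_of_nonneg_left (mul_nonneg hFS0 hpπ) (by linarith) (by linarith)
  · rw [cPr, cPr, Pr_allFailed_and_inspection_false hw0 hemit,
      Pr_allFailed_and_inspection_false hw0 hemit]
    exact div_le_div_of_nonneg_left (mul_nonneg (by linarith) hpπ) hi0 hij

/-- In a parallel system (the system fails iff every component fails), with the
same inspection error rates for all components, if `p_i ≤ p_j` then the posterior intervals
are nested: `P[u=0 | y_i=1] ≤ P[u=0 | y_j=1]` and `P[u=0 | y_i=0] ≥ P[u=0 | y_j=0]`,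
provided `0 < h_i < 1` and `0 < h_j < 1`. -/
theorem parallel_nested_intervals {Ω : Type*} [Fintype Ω] {N : ℕ} (w : Ω → ℝ)
    (hw0 : ∀ ω, 0 ≤ w ω) (hw1 : ∑ ω, w ω = 1)
    (s : Ω → Fin N → Bool) (y : Fin N → Ω → Bool)
    (εFA εFS : ℝ) (hFA0 : 0 ≤ εFA) (hFA : εFA < 1/2) (hFS0 : 0 ≤ εFS) (hFS : εFS < 1/2)
    (hemit : ∀ (k : Fin N) (σ : Fin N → Bool), 0 < Pr w (fun ω => s ω = σ) →
      cPr w (fun ω => y k ω = false) (fun ω => s ω = σ)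
        = if σ k = true then εFA else 1 - εFS)
    (i j : Fin N)
    (hi0 : 0 < Pr w (fun ω => y i ω = false)) (hi1 : Pr w (fun ω => y i ω = false) < 1)
    (hj0 : 0 < Pr w (fun ω => y j ω = false)) (hj1 : Pr w (fun ω => y j ω = false) < 1)
    (hpij : Pr w (fun ω => s ω i = false) ≤ Pr w (fun ω => s ω j = false)) :
    cPr w (fun ω => ∀ k, s ω k = false) (fun ω => y i ω = true)
        ≤ cPr w (fun ω => ∀ k, s ω k = false) (fun ω => y j ω = true)
      ∧ cPr w (fun ω => ∀ k, s ω k = false) (fun ω => y j ω = false)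
        ≤ cPr w (fun ω => ∀ k, s ω k = false) (fun ω => y i ω = false) :=
  parallel_nested_intervals_general w hw0 hw1 s y εFA εFS hFA hFS0 hFS hemit i j hi0 hj1 hpij
end

section
/- Consider a series system of two components with independent states, perfect inspections, equal repair costs C_{R,1} = C_{R,2} = C_R with 0 < C_R ≤ C_F/2. Then the expected posterior loss of inspecting component c_i under the local metric equals L^L_ω(i) = p_i·C_R + min{ C_R, p_j·C_F }, where j is the other component. -/
/-!
Observing the inspected component `c_i` in state `a`, each of the four actions has an explicit
posterior loss: the system fails surely if `c_i` is left failed, never if both components are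
working afterwards, and otherwise exactly when `c_j` has failed, which by independence still has
probability `p_j`. Since `C_F ≥ 2 C_R`, after seeing `c_i` failed it is optimal to repair it and
then pay `min {C_R, p_j C_F}` for `c_j`; after seeing it working only that second choice remains.
Averaging over the observation gives `p_i C_R + min {C_R, p_j C_F}`, and the case `i = 2` is the
case `i = 1` for the swapped system.
-/

open scoped Classical

/-- Conditional expectation `E[f | B]` (expectation of `f` under the posterior given `B`). -/
noncomputable def cExp {Ω : Type*} [Fintype Ω] (w : Ω → ℝ) (f : Ω → ℝ) (B : Ω → Prop) : ℝ :=
  (∑ ω ∈ Finset.univ.filter B, w ω * f ω) / Pr w B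

/-- Total maintenance loss for a two-component series system: repairing component `c_k`
(`A.1`, `A.2`) costs `CR` and makes its post-action state working (perfect repair);
the failure cost `CF` is paid iff the post-action series system fails, i.e. iff some
post-action component state is `false`. -/
noncomputable def seriesLoss {Ω : Type*} (CR CF : ℝ) (s1 s2 : Ω → Bool)
    (A : Bool × Bool) (ω : Ω) : ℝ :=
  CR * ((if A.1 = true then 1 else 0) + (if A.2 = true then 1 else 0))
    + CF * (if (A.1 || s1 ω) = false ∨ (A.2 || s2 ω) = false then 1 else 0)

section Probability

variable {Ω : Type*} [Fintype Ω] (w : Ω → ℝ)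

lemma Pr_congr {E F : Ω → Prop} (h : ∀ ω, E ω ↔ F ω) : Pr w E = Pr w F := by
  simp only [Pr, Finset.filter_congr fun ω _ => h ω]

lemma Pr_nonneg (hw0 : ∀ ω, 0 ≤ w ω) (E : Ω → Prop) : 0 ≤ Pr w E :=
  Finset.sum_nonneg fun ω _ => hw0 ω

lemma Pr_false_add_Pr_true (hw1 : ∑ ω, w ω = 1) (s : Ω → Bool) :
    Pr w (fun ω => s ω = false) + Pr w (fun ω => s ω = true) = 1 := by
  rw [Pr_congr w (E := fun ω => s ω = true) (F := fun ω => ¬ s ω = false) (by simp), Pr, Pr,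
    Finset.sum_filter_add_sum_filter_not, hw1]

lemma cPr_congr {A A' B : Ω → Prop} (h : ∀ ω, B ω → (A ω ↔ A' ω)) :
    cPr w A B = cPr w A' B := by
  rw [cPr, cPr, Pr_congr w fun ω => and_congr_left (h ω)]

lemma cPr_of_forall {A B : Ω → Prop} (hB : Pr w B ≠ 0) (h : ∀ ω, B ω → A ω) :
    cPr w A B = 1 := by
  rw [cPr, Pr_congr w fun ω => and_iff_right_of_imp (h ω), div_self hB]

lemma cPr_of_forall_not {A B : Ω → Prop} (h : ∀ ω, B ω → ¬ A ω) : cPr w A B = 0 := by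
  rw [cPr, Pr_congr w (F := fun _ => False) fun ω => iff_false_intro fun hAB => h ω hAB.2 hAB.1]
  simp [Pr]

lemma cPr_of_indep {s t : Ω → Bool}
    (hind : ∀ a b : Bool, Pr w (fun ω => s ω = a ∧ t ω = b)
        = Pr w (fun ω => s ω = a) * Pr w (fun ω => t ω = b))
    {a : Bool} (ha : Pr w (fun ω => s ω = a) ≠ 0) (b : Bool) :
    cPr w (fun ω => t ω = b) (fun ω => s ω = a) = Pr w (fun ω => t ω = b) := by
  rw [cPr, Pr_congr w fun ω => and_comm, hind, mul_div_cancel_left₀ _ ha]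

lemma indep_symm {s t : Ω → Bool}
    (hind : ∀ a b : Bool, Pr w (fun ω => s ω = a ∧ t ω = b)
        = Pr w (fun ω => s ω = a) * Pr w (fun ω => t ω = b)) (a b : Bool) :
    Pr w (fun ω => t ω = a ∧ s ω = b)
      = Pr w (fun ω => t ω = a) * Pr w (fun ω => s ω = b) := by
  rw [Pr_congr w fun ω => and_comm, hind, mul_comm]

lemma cExp_add_mul_indicator {B : Ω → Prop} (hB : Pr w B ≠ 0) (c d : ℝ) (E : Ω → Prop)
    [DecidablePred E] :
    cExp w (fun ω => c + d * if E ω then 1 else 0) B = c + d * cPr w E B := by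
  have hsum : ∑ ω ∈ Finset.univ.filter B, w ω * (c + d * if E ω then 1 else 0)
      = c * Pr w B + d * Pr w (fun ω => E ω ∧ B ω) := by
    simp only [Pr, Finset.sum_filter, Finset.mul_sum, ← Finset.sum_add_distrib]
    refine Finset.sum_congr rfl fun ω _ => ?_
    by_cases hE : E ω <;> by_cases hB : B ω <;> simp [hE, hB] <;> ring
  rw [cExp, cPr, hsum]
  field_simp

end Probability

lemma Finset.inf'_univ_bool_prod {α : Type*} [LinearOrder α] (f : Bool × Bool → α) :
    Finset.univ.inf' Finset.univ_nonempty f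
      = min (min (f (false, false)) (f (false, true))) (min (f (true, false)) (f (true, true))) := by
  refine le_antisymm ?_ ?_ <;>
    simp [Finset.le_inf'_iff, Finset.inf'_le_iff, Prod.forall]

section SeriesSystem

variable {Ω : Type*} (CR CF : ℝ) (s1 s2 : Ω → Bool)

lemma seriesLoss_swap (A : Bool × Bool) :
    seriesLoss CR CF s2 s1 A.swap = seriesLoss CR CF s1 s2 A := by
  funext ω
  simp only [seriesLoss, Prod.fst_swap, Prod.snd_swap, add_comm, or_comm]

variable [Fintype Ω] (w : Ω → ℝ)

lemma inf'_cExp_seriesLoss_swap (B : Ω → Prop) :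
    Finset.univ.inf' Finset.univ_nonempty (fun A => cExp w (seriesLoss CR CF s2 s1 A) B)
      = Finset.univ.inf' Finset.univ_nonempty (fun A => cExp w (seriesLoss CR CF s1 s2 A) B) := by
  rw [Finset.inf'_univ_eq_ciInf, Finset.inf'_univ_eq_ciInf,
    ← (Equiv.prodComm Bool Bool).iInf_comp]
  simp only [Equiv.prodComm_apply, seriesLoss_swap]

lemma cExp_seriesLoss_of_fst_eq
    (hind : ∀ a b : Bool, Pr w (fun ω => s1 ω = a ∧ s2 ω = b)
        = Pr w (fun ω => s1 ω = a) * Pr w (fun ω => s2 ω = b))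
    {a : Bool} (ha : Pr w (fun ω => s1 ω = a) ≠ 0) (A : Bool × Bool) :
    cExp w (seriesLoss CR CF s1 s2 A) (fun ω => s1 ω = a)
      = CR * ((if A.1 = true then 1 else 0) + (if A.2 = true then 1 else 0))
        + CF * (if (A.1 || a) = false then 1
          else if A.2 = true then 0 else Pr w (fun ω => s2 ω = false)) := by
  unfold seriesLoss
  rw [cExp_add_mul_indicator w ha]
  congr 2
  rw [cPr_congr w (A' := fun ω => (A.1 || a) = false ∨ (A.2 || s2 ω) = false)
    fun ω hω => by rw [hω]]
  rcases A with ⟨r1, r2⟩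
  cases (r1 || a)
  · exact cPr_of_forall w ha fun ω _ => Or.inl rfl
  · cases r2
    · simp only [Bool.false_or, Bool.true_eq_false, false_or, if_false]
      exact cPr_of_indep w hind ha false
    · exact cPr_of_forall_not w fun ω _ => by simp

lemma inf'_cExp_seriesLoss_of_fst_true (hw0 : ∀ ω, 0 ≤ w ω)
    (hind : ∀ a b : Bool, Pr w (fun ω => s1 ω = a ∧ s2 ω = b)
        = Pr w (fun ω => s1 ω = a) * Pr w (fun ω => s2 ω = b))
    (hCR : 0 ≤ CR) (hCRF : CR ≤ CF / 2) (h : Pr w (fun ω => s1 ω = true) ≠ 0) :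
    Finset.univ.inf' Finset.univ_nonempty
        (fun A => cExp w (seriesLoss CR CF s1 s2 A) (fun ω => s1 ω = true))
      = min CR (Pr w (fun ω => s2 ω = false) * CF) := by
  simp only [Finset.inf'_univ_bool_prod, cExp_seriesLoss_of_fst_eq CR CF s1 s2 w hind h]
  norm_num
  have hp : 0 ≤ Pr w (fun ω => s2 ω = false) * CF := mul_nonneg (Pr_nonneg w hw0 _) (by linarith)
  rw [min_comm (CF * _), mul_comm CF, min_eq_left]
  exact le_min (min_le_of_left_le (by linarith)) (min_le_of_left_le (by linarith))

lemma inf'_cExp_seriesLoss_of_fst_false (hw0 : ∀ ω, 0 ≤ w ω)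
    (hind : ∀ a b : Bool, Pr w (fun ω => s1 ω = a ∧ s2 ω = b)
        = Pr w (fun ω => s1 ω = a) * Pr w (fun ω => s2 ω = b))
    (hCR : 0 ≤ CR) (hCRF : CR ≤ CF / 2) (h : Pr w (fun ω => s1 ω = false) ≠ 0) :
    Finset.univ.inf' Finset.univ_nonempty
        (fun A => cExp w (seriesLoss CR CF s1 s2 A) (fun ω => s1 ω = false))
      = CR + min CR (Pr w (fun ω => s2 ω = false) * CF) := by
  simp only [Finset.inf'_univ_bool_prod, cExp_seriesLoss_of_fst_eq CR CF s1 s2 w hind h]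
  norm_num
  have hp : 0 ≤ Pr w (fun ω => s2 ω = false) * CF := mul_nonneg (Pr_nonneg w hw0 _) (by linarith)
  rw [min_eq_right (le_min (min_le_of_right_le (by linarith)) (min_le_of_right_le (by linarith))),
    mul_two, min_add_add_left, min_comm, mul_comm CF]

lemma posteriorLoss_inspect_fst (hw0 : ∀ ω, 0 ≤ w ω) (hw1 : ∑ ω, w ω = 1)
    (hind : ∀ a b : Bool, Pr w (fun ω => s1 ω = a ∧ s2 ω = b)
        = Pr w (fun ω => s1 ω = a) * Pr w (fun ω => s2 ω = b))
    (hCR : 0 ≤ CR) (hCRF : CR ≤ CF / 2) :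
    Pr w (fun ω => s1 ω = false) *
        (Finset.univ.inf' Finset.univ_nonempty fun A : Bool × Bool =>
          cExp w (seriesLoss CR CF s1 s2 A) (fun ω => s1 ω = false))
      + Pr w (fun ω => s1 ω = true) *
        (Finset.univ.inf' Finset.univ_nonempty fun A : Bool × Bool =>
          cExp w (seriesLoss CR CF s1 s2 A) (fun ω => s1 ω = true))
      = Pr w (fun ω => s1 ω = false) * CR
          + min CR (Pr w (fun ω => s2 ω = false) * CF) := by
  -- an observation of probability zero contributes nothing, whatever the junk posterior
  rw [mul_eq_mul_left_iff.2 (or_iff_not_imp_right.2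
      (inf'_cExp_seriesLoss_of_fst_false CR CF s1 s2 w hw0 hind hCR hCRF)),
    mul_eq_mul_left_iff.2 (or_iff_not_imp_right.2
      (inf'_cExp_seriesLoss_of_fst_true CR CF s1 s2 w hw0 hind hCR hCRF))]
  linear_combination min CR (Pr w (fun ω => s2 ω = false) * CF) * Pr_false_add_Pr_true w hw1 s1

end SeriesSystem

/-- For a series system of two components with independent states, perfect
inspections, and equal repair costs `0 < C_R ≤ C_F/2`, the expected posterior loss of
inspecting component `c_i` under the local metric equals
`L^L_ω(i) = p_i·C_R + min{ C_R, p_j·C_F }`, where `j` is the other component. -/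
theorem series_two_component_local_posterior_loss {Ω : Type*} [Fintype Ω] (w : Ω → ℝ)
    (hw0 : ∀ ω, 0 ≤ w ω) (hw1 : ∑ ω, w ω = 1)
    (s1 s2 : Ω → Bool)
    (hind : ∀ a b : Bool, Pr w (fun ω => s1 ω = a ∧ s2 ω = b)
        = Pr w (fun ω => s1 ω = a) * Pr w (fun ω => s2 ω = b))
    (CR CF : ℝ) (hCR : 0 < CR) (hCRF : CR ≤ CF / 2) :
    (Pr w (fun ω => s1 ω = false) *
        (Finset.univ.inf' Finset.univ_nonempty fun A : Bool × Bool =>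
          cExp w (seriesLoss CR CF s1 s2 A) (fun ω => s1 ω = false))
      + Pr w (fun ω => s1 ω = true) *
        (Finset.univ.inf' Finset.univ_nonempty fun A : Bool × Bool =>
          cExp w (seriesLoss CR CF s1 s2 A) (fun ω => s1 ω = true))
      = Pr w (fun ω => s1 ω = false) * CR
          + min CR (Pr w (fun ω => s2 ω = false) * CF))
    ∧ (Pr w (fun ω => s2 ω = false) *
        (Finset.univ.inf' Finset.univ_nonempty fun A : Bool × Bool =>
          cExp w (seriesLoss CR CF s1 s2 A) (fun ω => s2 ω = false))
      + Pr w (fun ω => s2 ω = true) *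
        (Finset.univ.inf' Finset.univ_nonempty fun A : Bool × Bool =>
          cExp w (seriesLoss CR CF s1 s2 A) (fun ω => s2 ω = true))
      = Pr w (fun ω => s2 ω = false) * CR
          + min CR (Pr w (fun ω => s1 ω = false) * CF)) := by
  refine ⟨posteriorLoss_inspect_fst CR CF s1 s2 w hw0 hw1 hind hCR.le hCRF, ?_⟩
  simpa only [inf'_cExp_seriesLoss_swap] using
    posteriorLoss_inspect_fst CR CF s2 s1 w hw0 hw1 (indep_symm w hind) hCR.le hCRF
end
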